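/- Let M = (M_y)_{y∈Y} be a quantum measurement that is δ-quantum-differentially-private (i.e. λ_max(M_y*M_y) ≤ e^δ λ_min(M_y*M_y) for all y). Then the implementation given by the positive square roots |M_y| = √(M_y*M_y) satisfies, for every pure state ρ = |ψ⟩⟨ψ| and every outcome y, that the trace-norm distance between ρ and the post-measurement state ρ_{y} = |M_y|ρ|M_y| / Tr[ρ M_y*M_y] is at most (e^{δ/2} - 1)/(e^{δ/2} + 1) = tanh(δ/4). -/

import Mathlib

open Matrix BigOperators ComplexOrder

/-!
Let `B = M_yᴴ M_y` have eigenvalues `λᵢ`, let `A = √B`, and let `wᵢ` be the weights of `ψ` in an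
eigenbasis of `B`. Then `p = ⟨ψ, B ψ⟩ = ∑ λᵢ wᵢ` and `⟨ψ, A ψ⟩ = ∑ √λᵢ wᵢ`, and the
post-measurement state is the pure state of `A ψ / √p`, whose overlap with `ψ` has squared
modulus `(∑ √λᵢ wᵢ)² / p`.

A difference of two pure states `u u* - v v*` has rank at most two and its square has trace
`2 (1 - |⟨u, v⟩|²)`, so by Cauchy–Schwarz over its (at most two) nonzero eigenvalues its trace
norm is at most `√(1 - |⟨u, v⟩|²)`. Differential privacy puts every `√λᵢ` in `[a, K a]` with
`a = √λ_min` and `K = e^{δ/2}`, and Kantorovich's inequality `4 a b E[X²] ≤ (a + b)² E[X]²`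
for `X ∈ [a, b]` turns this into `1 - E[X]² / E[X²] ≤ ((K - 1) / (K + 1))²`.
-/

/-- The positive semidefinite square root of a positive semidefinite matrix
(the definition `Matrix.PosSemidef.sqrt` of the older Mathlib, since removed). -/
noncomputable def Matrix.PosSemidef.sqrt {n 𝕜 : Type*} [Fintype n] [RCLike 𝕜] [DecidableEq n]
    {A : Matrix n n 𝕜} (hA : A.PosSemidef) : Matrix n n 𝕜 :=
  hA.1.eigenvectorUnitary.1 * diagonal ((↑) ∘ Real.sqrt ∘ hA.1.eigenvalues) *
  (star hA.1.eigenvectorUnitary : Matrix n n 𝕜)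

namespace Matrix

variable {n 𝕜 : Type*} [RCLike 𝕜]

lemma vecMulVec_real_smul_star (r : ℝ) (φ : n → 𝕜) :
    vecMulVec (r • φ) (star (r • φ)) = r ^ 2 • vecMulVec φ (star φ) := by
  rw [star_smul, star_trivial, smul_vecMulVec, vecMulVec_smul, smul_smul, sq]

variable [Fintype n]

theorem rank_add_le {m K : Type*} [Field K] (A B : Matrix m n K) :
    (A + B).rank ≤ A.rank + B.rank := by
  rw [rank, rank, rank, mulVecLin_add]
  exact (Submodule.finrank_mono (LinearMap.range_add_le _ _)).trans
    (Submodule.finrank_add_le_finrank_add_finrank _ _)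

lemma rank_vecMulVec_sub_vecMulVec_le {m K : Type*} [Field K] (u v : m → K) (u' v' : n → K) :
    (vecMulVec u u' - vecMulVec v v').rank ≤ 2 := by
  rw [sub_eq_add_neg, ← neg_vecMulVec]
  exact (rank_add_le _ _).trans (add_le_add (rank_vecMulVec_le _ _) (rank_vecMulVec_le _ _))

lemma trace_mul_self_vecMulVec_sub_vecMulVec {u v : n → 𝕜} (hu : star u ⬝ᵥ u = 1)
    (hv : star v ⬝ᵥ v = 1) :
    ((vecMulVec u (star u) - vecMulVec v (star v)) *
      (vecMulVec u (star u) - vecMulVec v (star v))).trace =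
        (2 - 2 * ‖star u ⬝ᵥ v‖ ^ 2 : ℝ) := by
  have hvu : star v ⬝ᵥ u = star (star u ⬝ᵥ v) := star_dotProduct _ _
  simp only [sub_mul, mul_sub, vecMulVec_mul_vecMulVec, trace_sub, trace_vecMulVec,
    dotProduct_smul, smul_eq_mul, dotProduct_comm _ (star u), dotProduct_comm _ (star v), hu, hv,
    hvu]
  rw [RCLike.star_def, RCLike.mul_conj, RCLike.conj_mul]
  push_cast
  ring

lemma IsHermitian.mul_vecMulVec_star_mul {A : Matrix n n 𝕜} (hA : A.IsHermitian) (ψ : n → 𝕜) :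
    A * vecMulVec ψ (star ψ) * A = vecMulVec (A *ᵥ ψ) (star (A *ᵥ ψ)) := by
  rw [mul_vecMulVec, vecMulVec_mul, star_mulVec, hA.eq]

variable [DecidableEq n]

lemma PosSemidef.sqrt_eq_cfc {A : Matrix n n 𝕜} (hA : A.PosSemidef) :
    hA.sqrt = cfc Real.sqrt A := by
  rw [hA.1.cfc_eq]; rfl

lemma PosSemidef.isHermitian_sqrt {A : Matrix n n 𝕜} (hA : A.PosSemidef) :
    hA.sqrt.IsHermitian :=
  hA.sqrt_eq_cfc ▸ cfc_predicate _ A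

lemma PosSemidef.sqrt_mul_self {A : Matrix n n 𝕜} (hA : A.PosSemidef) :
    hA.sqrt * hA.sqrt = A := by
  conv_rhs => rw [← cfc_id' ℝ A hA.1]
  rw [hA.sqrt_eq_cfc, ← cfc_mul ..]
  refine cfc_congr fun x hx => Real.mul_self_sqrt ?_
  obtain ⟨i, rfl⟩ := hA.1.spectrum_real_eq_range_eigenvalues ▸ hx
  exact hA.eigenvalues_nonneg i

namespace IsHermitian

variable {A : Matrix n n 𝕜}

lemma trace_cfc (hA : A.IsHermitian) (f : ℝ → ℝ) :
    (cfc f A).trace = ∑ i, (f (hA.eigenvalues i) : 𝕜) := by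
  rw [hA.cfc_eq, IsHermitian.cfc, Unitary.conjStarAlgAut_apply, trace_mul_cycle,
    Unitary.coe_star_mul_self, one_mul, trace_diagonal]
  rfl

lemma star_dotProduct_cfc_mulVec (hA : A.IsHermitian) (f : ℝ → ℝ) (x : n → 𝕜) :
    star x ⬝ᵥ cfc f A *ᵥ x = ∑ i, (f (hA.eigenvalues i) *
      ‖(star (hA.eigenvectorUnitary : Matrix n n 𝕜) *ᵥ x) i‖ ^ 2 : ℝ) := by
  set U : Matrix n n 𝕜 := hA.eigenvectorUnitary.1
  have hU : star x ᵥ* U = star (star U *ᵥ x) := by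
    rw [star_mulVec, star_eq_conjTranspose, conjTranspose_conjTranspose]
  rw [hA.cfc_eq, IsHermitian.cfc, Unitary.conjStarAlgAut_apply, ← mulVec_mulVec, ← mulVec_mulVec,
    dotProduct_mulVec, hU]
  simp only [dotProduct, mulVec_diagonal, Pi.star_apply, RCLike.star_def, Function.comp_apply]
  push_cast
  refine Finset.sum_congr rfl fun i _ => ?_
  rw [← RCLike.conj_mul]; ring

lemma exists_spectral_weights (hA : A.IsHermitian) {x : n → 𝕜} (hx : star x ⬝ᵥ x = 1) :
    ∃ w : n → ℝ, (∀ i, 0 ≤ w i) ∧ ∑ i, w i = 1 ∧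
      ∀ f : ℝ → ℝ, star x ⬝ᵥ cfc f A *ᵥ x = ∑ i, (f (hA.eigenvalues i) * w i : ℝ) := by
  refine ⟨fun i => ‖(star (hA.eigenvectorUnitary : Matrix n n 𝕜) *ᵥ x) i‖ ^ 2,
    fun i => by positivity, ?_, fun f => hA.star_dotProduct_cfc_mulVec f x⟩
  have h1 := hA.star_dotProduct_cfc_mulVec (fun _ => 1) x
  rw [cfc_const_one ℝ A hA.isSelfAdjoint, one_mulVec, hx] at h1
  simp only [one_mul] at h1
  exact_mod_cast h1.symm

lemma sum_sq_eigenvalues_eq_re_trace_mul_self (hA : A.IsHermitian) :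
    ∑ i, hA.eigenvalues i ^ 2 = RCLike.re (A * A).trace := by
  rw [← pow_two, ← cfc_pow_id (R := ℝ) A 2 hA.isSelfAdjoint, hA.trace_cfc]
  simp only [← RCLike.ofReal_sum, RCLike.ofReal_re]

lemma sq_sum_abs_eigenvalues_le (hA : A.IsHermitian) :
    (∑ i, |hA.eigenvalues i|) ^ 2 ≤ A.rank * ∑ i, hA.eigenvalues i ^ 2 := by
  set s := Finset.univ.filter fun i => hA.eigenvalues i ≠ 0
  have hrank : (A.rank : ℝ) = s.card := by
    rw [hA.rank_eq_card_non_zero_eigs, Fintype.card_subtype]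
  calc (∑ i, |hA.eigenvalues i|) ^ 2 = (∑ i ∈ s, |hA.eigenvalues i|) ^ 2 := by
        rw [Finset.sum_filter_of_ne fun i _ h => abs_ne_zero.mp h]
    _ ≤ s.card * ∑ i ∈ s, |hA.eigenvalues i| ^ 2 := sq_sum_le_card_mul_sum_sq
    _ ≤ A.rank * ∑ i, hA.eigenvalues i ^ 2 := by
        rw [hrank]
        gcongr
        simp only [sq_abs]
        exact Finset.sum_le_sum_of_subset_of_nonneg (Finset.filter_subset _ _)
          fun i _ _ => sq_nonneg _

lemma sum_abs_eigenvalues_le_of_eq_vecMulVec_sub {X : Matrix n n 𝕜}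
    (hX : X.IsHermitian) {u v : n → 𝕜} (hu : star u ⬝ᵥ u = 1) (hv : star v ⬝ᵥ v = 1)
    (hXuv : X = vecMulVec u (star u) - vecMulVec v (star v)) :
    (1 / 2 : ℝ) * ∑ i, |hX.eigenvalues i| ≤ √(1 - ‖star u ⬝ᵥ v‖ ^ 2) := by
  subst hXuv
  have hS : ∑ i, hX.eigenvalues i ^ 2 = 2 - 2 * ‖star u ⬝ᵥ v‖ ^ 2 := by
    rw [hX.sum_sq_eigenvalues_eq_re_trace_mul_self, trace_mul_self_vecMulVec_sub_vecMulVec hu hv,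
      RCLike.ofReal_re]
  have hS0 : 0 ≤ ∑ i, hX.eigenvalues i ^ 2 := by positivity
  have hrank : ((vecMulVec u (star u) - vecMulVec v (star v)).rank : ℝ) ≤ 2 := by
    exact_mod_cast rank_vecMulVec_sub_vecMulVec_le u v (star u) (star v)
  have hsq := hX.sq_sum_abs_eigenvalues_le
  rw [Real.le_sqrt (by positivity) (by linarith)]
  nlinarith

lemma sum_abs_eigenvalues_sub_smul_mul_vecMulVec_mul_le (hA : A.IsHermitian) {ψ : n → 𝕜}
    (hψ : star ψ ⬝ᵥ ψ = 1) {p : ℝ} (hp : 0 < p)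
    (hAψ : star ψ ⬝ᵥ (A * A) *ᵥ ψ = p)
    (h : (vecMulVec ψ (star ψ) - ((1 : 𝕜) / p) • (A * vecMulVec ψ (star ψ) * A)).IsHermitian) :
    (1 / 2 : ℝ) * ∑ i, |h.eigenvalues i| ≤ √(1 - ‖star ψ ⬝ᵥ A *ᵥ ψ‖ ^ 2 / p) := by
  set v : n → 𝕜 := (√p)⁻¹ • (A *ᵥ ψ) with hvdef
  have hp' : ((√p)⁻¹) ^ 2 = p⁻¹ := by rw [inv_pow, Real.sq_sqrt hp.le]
  have hv : star v ⬝ᵥ v = 1 := by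
    rw [hvdef, star_smul, star_trivial, smul_dotProduct, dotProduct_smul, star_mulVec,
      ← dotProduct_mulVec, mulVec_mulVec, hA.eq, hAψ, smul_smul, ← sq, hp',
      RCLike.real_smul_eq_coe_smul (K := 𝕜), smul_eq_mul, RCLike.ofReal_inv,
      inv_mul_cancel₀ (RCLike.ofReal_ne_zero.mpr hp.ne')]
  have hψv : ‖star ψ ⬝ᵥ v‖ ^ 2 = ‖star ψ ⬝ᵥ A *ᵥ ψ‖ ^ 2 / p := by
    rw [hvdef, dotProduct_smul, norm_smul, mul_pow, Real.norm_eq_abs, sq_abs, hp', inv_mul_eq_div]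
  have hXv : vecMulVec ψ (star ψ) - ((1 : 𝕜) / p) • (A * vecMulVec ψ (star ψ) * A) =
      vecMulVec ψ (star ψ) - vecMulVec v (star v) := by
    rw [hA.mul_vecMulVec_star_mul, hvdef, vecMulVec_real_smul_star, hp',
      RCLike.real_smul_eq_coe_smul (K := 𝕜), RCLike.ofReal_inv, one_div]
  rw [← hψv]
  exact h.sum_abs_eigenvalues_le_of_eq_vecMulVec_sub hψ hv hXv

end IsHermitian

end Matrix

namespace Finset

variable {ι : Type*} (s : Finset ι) {x w : ι → ℝ} {a b : ℝ}

theorem four_mul_mul_sum_sq_mul_le (ha : 0 ≤ a) (hx : ∀ i ∈ s, x i ∈ Set.Icc a b)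
    (hw : ∀ i ∈ s, 0 ≤ w i) (hw1 : ∑ i ∈ s, w i = 1) :
    4 * a * b * ∑ i ∈ s, x i ^ 2 * w i ≤ ((a + b) * ∑ i ∈ s, x i * w i) ^ 2 := by
  obtain ⟨j, hj⟩ : s.Nonempty := nonempty_of_sum_ne_zero (hw1 ▸ one_ne_zero)
  have hab : 0 ≤ a * b := mul_nonneg ha (ha.trans ((hx j hj).1.trans (hx j hj).2))
  have hp : 0 ≤ ∑ i ∈ s, x i ^ 2 * w i := sum_nonneg fun i hi => mul_nonneg (sq_nonneg _) (hw i hi)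
  have hmoment : ∑ i ∈ s, x i ^ 2 * w i ≤ (a + b) * ∑ i ∈ s, x i * w i - a * b := by
    calc ∑ i ∈ s, x i ^ 2 * w i ≤ ∑ i ∈ s, ((a + b) * x i - a * b) * w i :=
          sum_le_sum fun i hi => mul_le_mul_of_nonneg_right
            (by nlinarith [(hx i hi).1, (hx i hi).2]) (hw i hi)
      _ = (a + b) * ∑ i ∈ s, x i * w i - a * b := by
          simp only [sub_mul, sum_sub_distrib, mul_assoc, ← mul_sum, hw1, mul_one]
  nlinarith [sq_nonneg (∑ i ∈ s, x i ^ 2 * w i - a * b)]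

theorem sqrt_one_sub_sq_sum_mul_div_le {K : ℝ} (ha : 0 ≤ a)
    (hx : ∀ i ∈ s, x i ∈ Set.Icc a (K * a)) (hw : ∀ i ∈ s, 0 ≤ w i) (hw1 : ∑ i ∈ s, w i = 1)
    (hp : 0 < ∑ i ∈ s, x i ^ 2 * w i) :
    √(1 - (∑ i ∈ s, x i * w i) ^ 2 / ∑ i ∈ s, x i ^ 2 * w i) ≤ (K - 1) / (K + 1) := by
  obtain ⟨j, hj⟩ : s.Nonempty := nonempty_of_sum_ne_zero (hw1 ▸ one_ne_zero)
  have hKa : 0 < K * a := by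
    by_contra! hKa
    have hx0 : ∀ i ∈ s, x i = 0 := fun i hi => by linarith [hx i hi |>.1, hx i hi |>.2]
    exact hp.ne' (sum_eq_zero fun i hi => by rw [hx0 i hi]; ring)
  have ha0 : 0 < a := ha.lt_of_ne fun h => by simp [← h] at hKa
  have hK : 1 ≤ K := (le_mul_iff_one_le_left ha0).mp ((hx j hj).1.trans (hx j hj).2)
  have hkant : a ^ 2 * (4 * K * ∑ i ∈ s, x i ^ 2 * w i) ≤
      a ^ 2 * ((K + 1) ^ 2 * (∑ i ∈ s, x i * w i) ^ 2) := by
    linear_combination s.four_mul_mul_sum_sq_mul_le ha hx hw hw1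
  have := le_of_mul_le_mul_left hkant (by positivity)
  rw [Real.sqrt_le_left (div_nonneg (by linarith) (by linarith)), div_pow, one_sub_div hp.ne',
    div_le_div_iff₀ hp (by positivity)]
  linear_combination this

end Finset

theorem qdp_implies_gentle_on_pure_states
    {d : ℕ} {Y : Type*}
    (M : Y → Matrix (Fin d) (Fin d) ℂ)
    (δ : ℝ)
    (hdp : ∀ y, (⨆ i, (Matrix.posSemidef_conjTranspose_mul_self (M y)).1.eigenvalues i)
        ≤ Real.exp δ * ⨅ i, (Matrix.posSemidef_conjTranspose_mul_self (M y)).1.eigenvalues i)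
    (ψ : Fin d → ℂ) (hψ : star ψ ⬝ᵥ ψ = 1)
    (ρ : Matrix (Fin d) (Fin d) ℂ) (hρ : ρ = Matrix.vecMulVec ψ (star ψ))
    (y : Y)
    (p : ℝ) (hp : p = (star ψ ⬝ᵥ ((M y)ᴴ * M y).mulVec ψ).re) (hp0 : 0 < p)
    (ρy : Matrix (Fin d) (Fin d) ℂ)
    (hρy : ρy = ((1 : ℂ) / (p : ℂ)) •
      ((Matrix.posSemidef_conjTranspose_mul_self (M y)).sqrt * ρ *
        (Matrix.posSemidef_conjTranspose_mul_self (M y)).sqrt))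
    (h : (ρ - ρy).IsHermitian) :
    (1 / 2 : ℝ) * ∑ i, |h.eigenvalues i| ≤
      (Real.exp (δ / 2) - 1) / (Real.exp (δ / 2) + 1) := by
  set hB := posSemidef_conjTranspose_mul_self (M y)
  set x : Fin d → ℝ := fun i => √(hB.1.eigenvalues i)
  obtain ⟨w, hw0, hw1, hw⟩ := hB.1.exists_spectral_weights hψ
  have hBψ : star ψ ⬝ᵥ ((M y)ᴴ * M y) *ᵥ ψ = ((∑ i, x i ^ 2 * w i : ℝ) : ℂ) := by
    rw [← cfc_id' ℝ ((M y)ᴴ * M y) hB.1.isSelfAdjoint, hw]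
    simp only [x, Real.sq_sqrt (hB.eigenvalues_nonneg _)]
    -- the two sides differ only in `RCLike.ofReal` versus `Complex.ofReal`
    rfl
  have hAψ : star ψ ⬝ᵥ hB.sqrt *ᵥ ψ = ((∑ i, x i * w i : ℝ) : ℂ) := by
    rw [hB.sqrt_eq_cfc, hw]
    rfl
  have hpx : p = ∑ i, x i ^ 2 * w i := by rw [hp, hBψ, Complex.ofReal_re]
  have hx : ∀ i ∈ Finset.univ, x i ∈ Set.Icc √(⨅ j, hB.1.eigenvalues j)
      (Real.exp (δ / 2) * √(⨅ j, hB.1.eigenvalues j)) := by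
    intro i _
    refine ⟨Real.sqrt_le_sqrt (ciInf_le (Set.finite_range _).bddBelow i), ?_⟩
    rw [Real.exp_half, ← Real.sqrt_mul (Real.exp_pos δ).le]
    exact Real.sqrt_le_sqrt ((le_ciSup (Set.finite_range _).bddAbove i).trans (hdp y))
  subst hρ hρy
  calc (1 / 2 : ℝ) * ∑ i, |h.eigenvalues i| ≤ √(1 - ‖star ψ ⬝ᵥ hB.sqrt *ᵥ ψ‖ ^ 2 / p) :=
        hB.isHermitian_sqrt.sum_abs_eigenvalues_sub_smul_mul_vecMulVec_mul_le hψ hp0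
          (by rw [hB.sqrt_mul_self, hBψ, hpx]; rfl) h
    _ ≤ (Real.exp (δ / 2) - 1) / (Real.exp (δ / 2) + 1) := by
        rw [hAψ, Complex.norm_real, Real.norm_eq_abs, sq_abs, hpx]
        exact Finset.univ.sqrt_one_sub_sq_sum_mul_div_le (Real.sqrt_nonneg _) hx
          (fun i _ => hw0 i) hw1 (hpx ▸ hp0)
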